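/- arXiv:2209.00999 — 5 statements merged into one kernel-verified Lean document; each statement's English description precedes it below -/
import Mathlib

section
/- Let d ≥ 2 be an integer and δ > 0. There exists a constant c ≥ 1, depending only on d and δ, such that for every integer n ≥ 1 and all reals 0 ≤ t_0 ≤ t_1 ≤ 1: F_n^{−1}(t_1) − F_n^{−1}(t_0) ≤ c (t_1 − t_0), and t_1 − t_0 ≤ c ( F_n^{−1}(t_1) − F_n^{−1}(t_0) ). -/
open Real Set

lemma slope_bounds (p : ℝ) (hp : 0 < p) {a b : ℝ} (ha : 0 < a) (hab : a ≤ b) :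
    p * b ^ (-(p+1)) * (b - a) ≤ a ^ (-p) - b ^ (-p) ∧
      a ^ (-p) - b ^ (-p) ≤ p * a ^ (-(p+1)) * (b - a) := by
  rcases eq_or_lt_of_le hab with rfl | hlt
  · simp
  have hcont : ContinuousOn (fun x : ℝ => x ^ (-p)) (Icc a b) := by
    apply ContinuousOn.rpow_const continuousOn_id
    intro x hx
    exact Or.inl (ne_of_gt (lt_of_lt_of_le ha hx.1))
  have hderiv : ∀ x ∈ Ioo a b, HasDerivAt (fun x : ℝ => x ^ (-p))
      ((-p) * x ^ (-p - 1)) x := fun x hx =>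
    Real.hasDerivAt_rpow_const (Or.inl (ne_of_gt (lt_trans ha hx.1)))
  obtain ⟨ξ, hξ, hslope⟩ := exists_hasDerivAt_eq_slope (fun x : ℝ => x ^ (-p))
    (fun x : ℝ => (-p) * x ^ (-p - 1)) hlt hcont hderiv
  have hξ0 : (0:ℝ) < ξ := lt_trans ha hξ.1
  have hba : (0:ℝ) < b - a := sub_pos.mpr hlt
  have hE : (-p - 1) = -(p+1) := by ring
  have heq : a ^ (-p) - b ^ (-p) = p * ξ ^ (-(p+1)) * (b - a) := by
    rw [← hE]
    have := hslope
    field_simp at this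
    nlinarith [this]
  have h1 : b ^ (-(p+1)) ≤ ξ ^ (-(p+1)) :=
    Real.rpow_le_rpow_of_nonpos hξ0 hξ.2.le (by linarith)
  have h2 : ξ ^ (-(p+1)) ≤ a ^ (-(p+1)) :=
    Real.rpow_le_rpow_of_nonpos ha hξ.1.le (by linarith)
  exact ⟨heq ▸ mul_le_mul_of_nonneg_right (mul_le_mul_of_nonneg_left h1 hp.le) hba.le,
    heq ▸ mul_le_mul_of_nonneg_right (mul_le_mul_of_nonneg_left h2 hp.le) hba.le⟩

lemma inv_eq (p : ℝ) (hp : 0 < p) (N : ℝ) (hN : 1 ≤ N)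
    (hApos : 0 < (1 - (N+1) ^ (-p)) - (1 - N ^ (-p)))
    (t : ℝ) (ht0 : 0 ≤ t) (ht1 : t ≤ 1) :
    ∃ x, x ∈ Icc N (N+1) ∧
      1 - x ^ (-p) = (1 - N ^ (-p)) + t * ((1 - (N+1) ^ (-p)) - (1 - N ^ (-p))) ∧
      sInf {s : ℝ | N ≤ s ∧
        t ≤ ((1 - s ^ (-p)) - (1 - N ^ (-p))) / ((1 - (N+1) ^ (-p)) - (1 - N ^ (-p)))} = x := by
  set A : ℝ := (1 - (N+1) ^ (-p)) - (1 - N ^ (-p)) with hA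
  have hN0 : (0:ℝ) < N := lt_of_lt_of_le one_pos hN
  have hcont : ContinuousOn (fun s : ℝ => 1 - s ^ (-p)) (Icc N (N+1)) :=
    continuousOn_const.sub (ContinuousOn.rpow_const continuousOn_id
      fun x hx => Or.inl (ne_of_gt (lt_of_lt_of_le hN0 hx.1)))
  have hmem : (1 - N ^ (-p)) + t * A ∈
      Icc ((fun s : ℝ => 1 - s ^ (-p)) N) ((fun s : ℝ => 1 - s ^ (-p)) (N+1)) := by
    constructor
    · simp only
      nlinarith
    · simp only
      nlinarith
  obtain ⟨x, hx, hFx⟩ := intermediate_value_Icc (by linarith : N ≤ N+1) hcont hmem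
  simp only at hFx
  refine ⟨x, hx, hFx, ?_⟩
  have hxS : x ∈ {s : ℝ | N ≤ s ∧ t ≤ ((1 - s ^ (-p)) - (1 - N ^ (-p))) / A} := by
    refine ⟨hx.1, ?_⟩
    rw [hFx]
    rw [add_sub_cancel_left, mul_div_assoc, div_self (ne_of_gt hApos), mul_one]
  have hlb : ∀ s ∈ {s : ℝ | N ≤ s ∧ t ≤ ((1 - s ^ (-p)) - (1 - N ^ (-p))) / A}, x ≤ s := by
    rintro s ⟨hs1, hs2⟩
    by_contra hcon
    push_neg at hcon
    have hs0 : (0:ℝ) < s := lt_of_lt_of_le hN0 hs1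
    have hmono : x ^ (-p) < s ^ (-p) :=
      Real.rpow_lt_rpow_of_neg hs0 hcon (by linarith)
    have := (le_div_iff₀ hApos).mp hs2
    nlinarith
  exact le_antisymm (csInf_le ⟨N, fun s hs => hs.1⟩ hxS) (le_csInf ⟨x, hxS⟩ hlb)

set_option maxHeartbeats 1000000 in
/-- **Regularity of the inverse CDF on each unit interval of radii.**
For `d ≥ 2`, `δ > 0`, with `F t = 1 - t^{-(d+δ)}` and
`F_n^{-1} t = inf {s ≥ n : (F s - F n)/(F (n+1) - F n) ≥ t}`, there is a constant
`c ≥ 1` (depending only on `d` and `δ`) such that for all `n ≥ 1` and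
`0 ≤ t₀ ≤ t₁ ≤ 1`:
`F_n^{-1} t₁ - F_n^{-1} t₀ ≤ c (t₁ - t₀)` and `t₁ - t₀ ≤ c (F_n^{-1} t₁ - F_n^{-1} t₀)`. -/
theorem stmt_2 (d : ℕ) (hd : 2 ≤ d) (δ : ℝ) (hδ : 0 < δ) :
    ∃ c : ℝ, 1 ≤ c ∧
      ∀ n : ℕ, 1 ≤ n → ∀ t0 t1 : ℝ, 0 ≤ t0 → t0 ≤ t1 → t1 ≤ 1 →
        let F : ℝ → ℝ := fun t => 1 - t ^ (-((d : ℝ) + δ))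
        let Finv : ℝ → ℝ := fun t =>
          sInf {s : ℝ | (n : ℝ) ≤ s ∧ t ≤ (F s - F n) / (F ((n : ℝ) + 1) - F n)}
        Finv t1 - Finv t0 ≤ c * (t1 - t0) ∧ t1 - t0 ≤ c * (Finv t1 - Finv t0) := by
  set p : ℝ := (d : ℝ) + δ with hpdef
  have hp : 0 < p := by positivity
  set q : ℝ := p + 1 with hqdef
  have hq : 0 < q := by positivity
  have hqneg : -q ≤ 0 := by linarith
  set c : ℝ := (2 : ℝ) ^ q with hcdef
  have hc1 : (1:ℝ) ≤ c := Real.one_le_rpow one_le_two (le_of_lt hq)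
  have hE : (2:ℝ) ^ (-q) * c = 1 := by
    rw [hcdef, ← Real.rpow_add two_pos]
    simp
  have hEpos : (0:ℝ) < (2:ℝ) ^ (-q) := Real.rpow_pos_of_pos two_pos _
  refine ⟨c, hc1, ?_⟩
  intro n hn t0 t1 h00 h01 h11 F Finv
  have hN : (1:ℝ) ≤ (n:ℝ) := by exact_mod_cast hn
  have hN0 : (0:ℝ) < (n:ℝ) := lt_of_lt_of_le one_pos hN
  set N : ℝ := (n:ℝ)
  -- bounds on A
  obtain ⟨hAlow, hAhigh⟩ := slope_bounds p hp hN0 (by linarith : N ≤ N + 1)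
  rw [← hqdef] at hAlow hAhigh
  have hAeq : (1 - (N+1) ^ (-p)) - (1 - N ^ (-p)) = N ^ (-p) - (N+1) ^ (-p) := by ring
  have hNq : (0:ℝ) < N ^ (-q) := Real.rpow_pos_of_pos hN0 _
  have hN1q : (0:ℝ) < (N+1) ^ (-q) := Real.rpow_pos_of_pos (by linarith) _
  have hApos : 0 < (1 - (N+1) ^ (-p)) - (1 - N ^ (-p)) := by
    rw [hAeq]
    nlinarith
  obtain ⟨x0, hx0I, hx0F, hx0inf⟩ := inv_eq p hp N hN hApos t0 h00 (le_trans h01 h11)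
  obtain ⟨x1, hx1I, hx1F, hx1inf⟩ := inv_eq p hp N hN hApos t1 (le_trans h00 h01) h11
  have hF0 : Finv t0 = x0 := hx0inf
  have hF1 : Finv t1 = x1 := hx1inf
  rw [hF0, hF1]
  set A : ℝ := (1 - (N+1) ^ (-p)) - (1 - N ^ (-p)) with hAdef
  -- x0 ≤ x1
  have hFle : 1 - x0 ^ (-p) ≤ 1 - x1 ^ (-p) := by
    rw [hx0F, hx1F]
    nlinarith
  have hx01 : x0 ≤ x1 := by
    by_contra hcon
    push_neg at hcon
    have := Real.rpow_lt_rpow_of_neg (lt_of_lt_of_le hN0 hx1I.1) hcon (by linarith : -p < 0)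
    linarith
  have hx10 : (0:ℝ) ≤ x1 - x0 := by linarith
  -- slope bounds between x0 and x1
  obtain ⟨hlow, hhigh⟩ := slope_bounds p hp (lt_of_lt_of_le hN0 hx0I.1) hx01
  rw [← hqdef] at hlow hhigh
  have hdiff : x0 ^ (-p) - x1 ^ (-p) = (t1 - t0) * A := by
    linear_combination hx1F - hx0F
  -- endpoint monotonicity of t ↦ t^(-q)
  have hx1q : (2:ℝ) ^ (-q) * N ^ (-q) ≤ x1 ^ (-q) := by
    have h2N : x1 ≤ 2 * N := by
      have := hx1I.2; linarith
    calc (2:ℝ) ^ (-q) * N ^ (-q) = (2 * N) ^ (-q) := by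
          rw [Real.mul_rpow (by norm_num) (le_of_lt hN0)]
      _ ≤ x1 ^ (-q) :=
          Real.rpow_le_rpow_of_nonpos (lt_of_lt_of_le hN0 hx1I.1) h2N hqneg
  have hx0q : x0 ^ (-q) ≤ N ^ (-q) :=
    Real.rpow_le_rpow_of_nonpos hN0 hx0I.1 hqneg
  have hAlow' : p * ((2:ℝ) ^ (-q) * N ^ (-q)) ≤ A := by
    have hN1 : (2:ℝ) ^ (-q) * N ^ (-q) ≤ (N+1) ^ (-q) := by
      calc (2:ℝ) ^ (-q) * N ^ (-q) = (2 * N) ^ (-q) := by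
            rw [Real.mul_rpow (by norm_num) (le_of_lt hN0)]
        _ ≤ (N+1) ^ (-q) :=
            Real.rpow_le_rpow_of_nonpos (by linarith) (by linarith) hqneg
    rw [hAeq]
    nlinarith
  have hAhigh' : A ≤ p * N ^ (-q) := by
    rw [hAeq]
    nlinarith
  -- combine
  have hI : p * ((2:ℝ) ^ (-q) * N ^ (-q)) * (x1 - x0) ≤ (t1 - t0) * A := by
    calc p * ((2:ℝ) ^ (-q) * N ^ (-q)) * (x1 - x0)
        ≤ p * x1 ^ (-q) * (x1 - x0) :=
          mul_le_mul_of_nonneg_right (mul_le_mul_of_nonneg_left hx1q hp.le) hx10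
      _ ≤ (t1 - t0) * A := by rw [← hdiff]; exact hlow
  have hII : (t1 - t0) * A ≤ p * N ^ (-q) * (x1 - x0) := by
    calc (t1 - t0) * A = x0 ^ (-p) - x1 ^ (-p) := hdiff.symm
      _ ≤ p * x0 ^ (-q) * (x1 - x0) := hhigh
      _ ≤ p * N ^ (-q) * (x1 - x0) :=
          mul_le_mul_of_nonneg_right (mul_le_mul_of_nonneg_left hx0q hp.le) hx10
  have ht10 : (0:ℝ) ≤ t1 - t0 := by linarith
  have hpNq : (0:ℝ) < p * N ^ (-q) := mul_pos hp hNq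
  constructor
  · -- x1 - x0 ≤ c * (t1 - t0)
    have key : (2:ℝ) ^ (-q) * (x1 - x0) ≤ t1 - t0 := by
      have h1 : (t1 - t0) * A ≤ (t1 - t0) * (p * N ^ (-q)) :=
        mul_le_mul_of_nonneg_left hAhigh' ht10
      have h2 : p * N ^ (-q) * ((2:ℝ) ^ (-q) * (x1 - x0)) ≤ p * N ^ (-q) * (t1 - t0) := by
        calc p * N ^ (-q) * ((2:ℝ) ^ (-q) * (x1 - x0))
            = p * ((2:ℝ) ^ (-q) * N ^ (-q)) * (x1 - x0) := by ring
          _ ≤ (t1 - t0) * A := hI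
          _ ≤ (t1 - t0) * (p * N ^ (-q)) := h1
          _ = p * N ^ (-q) * (t1 - t0) := by ring
      exact le_of_mul_le_mul_left h2 hpNq
    have hxx : x1 - x0 = c * ((2:ℝ) ^ (-q) * (x1 - x0)) := by
      rw [← mul_assoc, mul_comm c, hE, one_mul]
    rw [hxx]
    exact mul_le_mul_of_nonneg_left key (by linarith)
  · -- t1 - t0 ≤ c * (x1 - x0)
    have key : (2:ℝ) ^ (-q) * (t1 - t0) ≤ x1 - x0 := by
      have h1 : (t1 - t0) * (p * ((2:ℝ) ^ (-q) * N ^ (-q))) ≤ (t1 - t0) * A :=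
        mul_le_mul_of_nonneg_left hAlow' ht10
      have h2 : p * N ^ (-q) * ((2:ℝ) ^ (-q) * (t1 - t0)) ≤ p * N ^ (-q) * (x1 - x0) := by
        calc p * N ^ (-q) * ((2:ℝ) ^ (-q) * (t1 - t0))
            = (t1 - t0) * (p * ((2:ℝ) ^ (-q) * N ^ (-q))) := by ring
          _ ≤ (t1 - t0) * A := h1
          _ ≤ p * N ^ (-q) * (x1 - x0) := hII
      exact le_of_mul_le_mul_left h2 hpNq
    have hxx : t1 - t0 = c * ((2:ℝ) ^ (-q) * (t1 - t0)) := by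
      rw [← mul_assoc, mul_comm c, hE, one_mul]
    rw [hxx]
    exact mul_le_mul_of_nonneg_left key (by linarith)
end

section
/- Let ℓ ≥ 1 be an integer, let m be an integer with 1 ≤ m ≤ 2^ℓ − 1, and set p := m·2^{−ℓ}. Let x be uniformly distributed on {0,1}^ℓ. Then for every 1 ≤ j ≤ ℓ, the probability that flipping the j-th bit changes the indicator of { π ≥ 1 − p } satisfies P( 1[π(σ_j^1 x) ≥ 1 − p] ≠ 1[π(σ_j^0 x) ≥ 1 − p] ) ≤ 2·min( 2^{−j}, p ). -/
open Finset

lemma auxN_inj (ℓ : ℕ) : Function.Injective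
    (fun x : Fin ℓ → Bool => ∑ i, if x i then 2 ^ ((Fin.rev i : Fin ℓ) : ℕ) else 0) := by
  have key : ∀ x : Fin ℓ → Bool,
      (∑ i, if x i then 2 ^ ((Fin.rev i : Fin ℓ) : ℕ) else 0)
        = (finFunctionFinEquiv (fun i => if x (Fin.rev i) then (1 : Fin 2) else 0) : ℕ) := by
    intro x
    rw [finFunctionFinEquiv_apply]
    rw [← Equiv.sum_comp (Fin.revPerm : Equiv.Perm (Fin ℓ))
      (fun i => if x i then 2 ^ ((Fin.rev i : Fin ℓ) : ℕ) else 0)]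
    refine Finset.sum_congr rfl fun i _ => ?_
    simp [Fin.revPerm]
    by_cases h : x (Fin.rev i) <;> simp [h]
  intro x y h
  simp only at h
  rw [key x, key y] at h
  have h2 := finFunctionFinEquiv.injective (Fin.val_injective h)
  funext i
  have := congrFun h2 (Fin.rev i)
  simp only [Fin.rev_rev] at this
  by_cases hx : x i <;> by_cases hy : y i <;> simp [hx, hy] at this ⊢

lemma aux_sum_pow (ℓ : ℕ) : ∑ i : Fin ℓ, 2 ^ (i : ℕ) = 2 ^ ℓ - 1 := by
  rw [Fin.sum_univ_eq_sum_range]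
  induction ℓ with
  | zero => simp
  | succ n ih =>
    rw [Finset.sum_range_succ, ih]
    have : 1 ≤ 2 ^ n := Nat.one_le_two_pow
    ring_nf
    omega

lemma auxN_lt (ℓ : ℕ) (x : Fin ℓ → Bool) :
    (∑ i, if x i then 2 ^ ((Fin.rev i : Fin ℓ) : ℕ) else 0) < 2 ^ ℓ := by
  have h1 : (∑ i, if x i then 2 ^ ((Fin.rev i : Fin ℓ) : ℕ) else 0)
      ≤ ∑ i : Fin ℓ, 2 ^ ((Fin.rev i : Fin ℓ) : ℕ) := by
    apply Finset.sum_le_sum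
    intro i _
    split <;> simp
  have h2 : ∑ i : Fin ℓ, 2 ^ ((Fin.rev i : Fin ℓ) : ℕ) = ∑ i : Fin ℓ, 2 ^ (i : ℕ) := by
    rw [← Equiv.sum_comp (Fin.revPerm : Equiv.Perm (Fin ℓ)) (fun i => 2 ^ ((i : Fin ℓ) : ℕ))]
    simp [Fin.revPerm]
  rw [h2, aux_sum_pow] at h1
  have : 1 ≤ 2 ^ ℓ := Nat.one_le_two_pow
  omega

lemma auxN_update (ℓ : ℕ) (x : Fin ℓ → Bool) (j : Fin ℓ) (b : Bool) :
    (∑ i, if Function.update x j b i then 2 ^ ((Fin.rev i : Fin ℓ) : ℕ) else 0)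
      = (if b then 2 ^ ((Fin.rev j : Fin ℓ) : ℕ) else 0)
        + ∑ i ∈ Finset.univ.erase j, (if x i then 2 ^ ((Fin.rev i : Fin ℓ) : ℕ) else 0) := by
  rw [← Finset.add_sum_erase _ _ (Finset.mem_univ j)]
  congr 1
  · simp
  · refine Finset.sum_congr rfl fun i hi => ?_
    rw [Function.update_of_ne (Finset.ne_of_mem_erase hi)]

lemma aux_pow (ℓ : ℕ) (i : Fin ℓ) :
    (2 : ℝ)⁻¹ ^ ((i : ℕ) + 1) * 2 ^ ℓ = 2 ^ ((Fin.rev i : Fin ℓ) : ℕ) := by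
  have hi : ((i : ℕ) + 1) + ((Fin.rev i : Fin ℓ) : ℕ) = ℓ := by
    have h1 := Fin.val_rev i
    have h2 := i.isLt
    omega
  have h2 : (2 : ℝ) ^ ((i : ℕ) + 1) * 2 ^ ((Fin.rev i : Fin ℓ) : ℕ) = 2 ^ ℓ := by
    rw [← pow_add, hi]
  rw [inv_pow, inv_mul_eq_div, div_eq_iff (by positivity)]
  rw [← h2]; ring

lemma aux_pi_mul (ℓ : ℕ) (v : Fin ℓ → Bool) :
    (∑ i, if v i then (2 : ℝ)⁻¹ ^ ((i : ℕ) + 1) else 0) * 2 ^ ℓ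
      = ((∑ i, if v i then 2 ^ ((Fin.rev i : Fin ℓ) : ℕ) else 0 : ℕ) : ℝ) := by
  push_cast
  rw [Finset.sum_mul]
  refine Finset.sum_congr rfl fun i _ => ?_
  by_cases h : v i
  · simp only [h, if_true]
    rw [inv_pow, inv_mul_eq_div, div_eq_iff (by positivity), ← pow_add]
    congr 1
    have h2 := Fin.val_rev i
    have h3 := i.isLt
    omega
  · simp [h]

/-- **Influence of a single dyadic bit.**
Let `p = m 2^{-ℓ}` with `1 ≤ m ≤ 2^ℓ - 1`, and let `x` be uniform on `{0,1}^ℓ`.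
For every bit `j` (so `j+1 ∈ {1,…,ℓ}` in 1-based indexing), the probability that
setting bit `j` to `1` versus `0` changes the indicator of `{π ≥ 1 - p}` is at most
`2 ⋅ min(2^{-(j+1)}, p)`, where `π(x) = ∑_{k=1}^ℓ x_k 2^{-k}`. -/
theorem stmt_4 (ℓ : ℕ) (hℓ : 1 ≤ ℓ) (m : ℕ) (hm1 : 1 ≤ m) (hm2 : m ≤ 2 ^ ℓ - 1) :
    let p : ℝ := (m : ℝ) * (2 : ℝ)⁻¹ ^ ℓ
    let π : (Fin ℓ → Bool) → ℝ := fun x => ∑ i, if x i then (2 : ℝ)⁻¹ ^ ((i : ℕ) + 1) else 0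
    ∀ j : Fin ℓ,
      (Nat.card {x : Fin ℓ → Bool //
          ¬ ((1 - p ≤ π (Function.update x j true)) ↔ (1 - p ≤ π (Function.update x j false)))} : ℝ)
        / 2 ^ ℓ
      ≤ 2 * min ((2 : ℝ)⁻¹ ^ ((j : ℕ) + 1)) p := by
  intro p π j
  set N : (Fin ℓ → Bool) → ℕ :=
    fun x => ∑ i, if x i then 2 ^ ((Fin.rev i : Fin ℓ) : ℕ) else 0 with hNdef
  have hpow1 : 1 ≤ 2 ^ ℓ := Nat.one_le_two_pow
  have hm2' : m ≤ 2 ^ ℓ := by omega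
  have hpm : p * 2 ^ ℓ = (m : ℝ) := by
    rw [show p = (m : ℝ) * (2 : ℝ)⁻¹ ^ ℓ from rfl, mul_assoc, inv_pow,
      inv_mul_cancel₀ (by positivity), mul_one]
  set t : ℕ := 2 ^ ℓ - m with htdef
  set d : ℕ := 2 ^ ((Fin.rev j : Fin ℓ) : ℕ) with hddef
  have hd : d ≤ 2 ^ ℓ := Nat.pow_le_pow_right (by norm_num) (le_of_lt (Fin.is_lt _))
  -- translation lemma
  have trans : ∀ v : Fin ℓ → Bool, (1 - p ≤ π v) ↔ (t ≤ N v) := by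
    intro v
    have hpos : (0 : ℝ) < 2 ^ ℓ := by positivity
    rw [show (1 - p ≤ π v) ↔ (1 - p) * 2 ^ ℓ ≤ π v * 2 ^ ℓ from
      (mul_le_mul_iff_of_pos_right hpos).symm]
    rw [show π v = ∑ i, if v i then (2 : ℝ)⁻¹ ^ ((i : ℕ) + 1) else 0 from rfl,
      aux_pi_mul ℓ v]
    rw [sub_mul, one_mul, hpm]
    constructor
    · intro h
      have : (2 : ℝ) ^ ℓ ≤ (N v : ℝ) + m := by linarith
      have : (2 : ℕ) ^ ℓ ≤ N v + m := by exact_mod_cast this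
      omega
    · intro h
      have : (2 : ℕ) ^ ℓ ≤ N v + m := by omega
      have : (2 : ℝ) ^ ℓ ≤ (N v : ℝ) + m := by exact_mod_cast this
      linarith
  -- update relation
  have hupd : ∀ x : Fin ℓ → Bool, N (Function.update x j true) = N (Function.update x j false) + d := by
    intro x
    rw [hNdef]
    simp only
    rw [auxN_update ℓ x j true, auxN_update ℓ x j false]
    simp [hddef]
    ring
  -- the bad set characterization
  have key : ∀ x : Fin ℓ → Bool,
      (¬ ((1 - p ≤ π (Function.update x j true)) ↔ (1 - p ≤ π (Function.update x j false))))
        ↔ (t ≤ N (Function.update x j false) + d ∧ N (Function.update x j false) < t) := by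
    intro x
    rw [trans, trans, hupd x]
    set n := N (Function.update x j false) with hn
    have hba : (t ≤ n) → (t ≤ n + d) := fun h' => h'.trans (Nat.le_add_right _ _)
    constructor
    · intro h
      have hnb : ¬ (t ≤ n) := fun h2 => h (iff_of_true (hba h2) h2)
      have h1 : t ≤ n + d := by
        by_contra h1
        exact h (iff_of_false h1 (fun h2 => h1 (hba h2)))
      exact ⟨h1, Nat.lt_of_not_le hnb⟩
    · rintro ⟨h1, h2⟩ hiff
      exact absurd (hiff.mp h1) (Nat.not_le.2 h2)
  -- counting
  set B := {x : Fin ℓ → Bool //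
      ¬ ((1 - p ≤ π (Function.update x j true)) ↔ (1 - p ≤ π (Function.update x j false)))}
  set s : Finset ℕ := Finset.Ico (t - d) (min t (2 ^ ℓ - d)) with hsdef
  have hinj : ∃ f : B → Bool × {k // k ∈ s}, Function.Injective f := by
    refine ⟨fun x => ⟨x.1 j, ⟨N (Function.update x.1 j false), ?_⟩⟩, ?_⟩
    · have hx := (key x.1).mp x.2
      have hlt : N (Function.update x.1 j true) < 2 ^ ℓ := auxN_lt ℓ _
      rw [hupd x.1] at hlt
      simp only [hsdef, Finset.mem_Ico]
      simp only [hNdef] at hx hlt ⊢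
      omega
    · intro a b hab
      simp only [Prod.mk.injEq, Subtype.mk.injEq] at hab
      obtain ⟨h1, h2⟩ := hab
      have h3 : Function.update a.1 j false = Function.update b.1 j false := auxN_inj ℓ h2
      apply Subtype.ext
      funext i
      by_cases hij : i = j
      · subst hij; exact h1
      · have := congrFun h3 i
        rwa [Function.update_of_ne hij, Function.update_of_ne hij] at this
  obtain ⟨f, hf⟩ := hinj
  have hcard : Nat.card B ≤ 2 * min d m := by
    have h1 : Nat.card B ≤ Nat.card (Bool × {k // k ∈ s}) :=
      Nat.card_le_card_of_injective f hf
    rw [Nat.card_prod, Nat.card_eq_fintype_card (α := Bool), Fintype.card_bool,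
      Nat.card_eq_finsetCard] at h1
    rw [hsdef, Nat.card_Ico] at h1
    omega
  -- conclude
  have hpos : (0 : ℝ) < 2 ^ ℓ := by positivity
  rw [div_le_iff₀ hpos]
  have hrhs : 2 * min ((2 : ℝ)⁻¹ ^ ((j : ℕ) + 1)) p * 2 ^ ℓ = 2 * ((min d m : ℕ) : ℝ) := by
    rw [mul_assoc, min_mul_of_nonneg _ _ (le_of_lt hpos), aux_pow ℓ j, hpm]
    push_cast [Nat.cast_min]
    simp [hddef, Fin.val_rev]
  rw [hrhs]
  have : ((Nat.card B : ℕ) : ℝ) ≤ ((2 * min d m : ℕ) : ℝ) := by exact_mod_cast hcard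
  push_cast at this ⊢
  linarith
end

section
/- There exists a universal constant C > 0 such that the following holds. Let ℓ ≥ 1 be an integer, let m be an integer with 1 ≤ m ≤ 2^{ℓ−1}, and set p := m·2^{−ℓ} ∈ (0, 1/2]. Let x be uniformly distributed on {0,1}^ℓ. Then ∑_{j=1}^ℓ P( 1[π(σ_j^1 x) ≥ 1 − p] ≠ 1[π(σ_j^0 x) ≥ 1 − p] ) ≤ C·p·|log p|. -/
open Finset

private def Mfun (ℓ : ℕ) (x : Fin ℓ → Bool) : ℕ := ∑ i, (x i).toNat * 2 ^ (ℓ - 1 - (i : ℕ))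


private lemma Mfun_eq (ℓ : ℕ) (x : Fin ℓ → Bool) :
    Mfun ℓ x = ((finFunctionFinEquiv (fun i : Fin ℓ => (⟨(x i.rev).toNat, by cases x i.rev <;> simp⟩ : Fin 2))) : ℕ) := by
  rw [finFunctionFinEquiv_apply]
  unfold Mfun
  rw [← Equiv.sum_comp (Fin.revPerm (n := ℓ))]
  refine Finset.sum_congr rfl fun i _ => ?_
  have h2 : (i : ℕ) < ℓ := i.isLt
  have h1 : ((Fin.revPerm i : Fin ℓ) : ℕ) = ℓ - 1 - (i : ℕ) := by
    simp [Fin.val_rev]; omega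
  simp only [Fin.revPerm_apply, Fin.rev_rev]
  have h3 : ℓ - 1 - ((i.rev : Fin ℓ) : ℕ) = (i : ℕ) := by rw [Fin.val_rev]; omega
  rw [h3]

private lemma Mfun_inj (ℓ : ℕ) : Function.Injective (Mfun ℓ) := by
  intro x y h
  rw [Mfun_eq, Mfun_eq] at h
  have h2 := finFunctionFinEquiv.injective (Fin.val_injective h)
  funext i
  have h3 := congrArg Fin.val (congrFun h2 i.rev)
  simp only [Fin.rev_rev] at h3
  cases hx : x i <;> cases hy : y i <;> simp_all

private lemma Mfun_lt (ℓ : ℕ) (x : Fin ℓ → Bool) : Mfun ℓ x < 2 ^ ℓ := by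
  rw [Mfun_eq]
  exact (finFunctionFinEquiv _).isLt


private lemma Mfun_update (ℓ : ℕ) (x : Fin ℓ → Bool) (j : Fin ℓ) (b : Bool) :
    Mfun ℓ (Function.update x j b) =
      b.toNat * 2 ^ (ℓ - 1 - (j : ℕ)) + ∑ i ∈ univ \ {j}, (x i).toNat * 2 ^ (ℓ - 1 - (i : ℕ)) := by
  unfold Mfun
  have : (fun i : Fin ℓ => ((Function.update x j b) i).toNat * 2 ^ (ℓ - 1 - (i : ℕ)))
      = Function.update (fun i : Fin ℓ => (x i).toNat * 2 ^ (ℓ - 1 - (i : ℕ))) j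
          (b.toNat * 2 ^ (ℓ - 1 - (j : ℕ))) := by
    funext i
    rcases eq_or_ne i j with rfl | h
    · simp
    · simp [Function.update_of_ne h]
  rw [this, Finset.sum_update_of_mem (Finset.mem_univ j)]

-- bridge: 1 - p ≤ π x ↔ 2^ℓ - m ≤ Mfun ℓ x
private lemma pi_iff (ℓ m : ℕ) (hm : m ≤ 2 ^ ℓ) (x : Fin ℓ → Bool) :
    (1 - (m : ℝ) * (2 : ℝ)⁻¹ ^ ℓ ≤ ∑ i : Fin ℓ, if x i then (2 : ℝ)⁻¹ ^ ((i : ℕ) + 1) else 0)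
      ↔ 2 ^ ℓ - m ≤ Mfun ℓ x := by
  have h2 : (0:ℝ) < 2 ^ ℓ := by positivity
  have key : (∑ i : Fin ℓ, if x i then (2 : ℝ)⁻¹ ^ ((i : ℕ) + 1) else 0) = (Mfun ℓ x : ℝ) / 2 ^ ℓ := by
    unfold Mfun
    push_cast
    rw [Finset.sum_div]
    refine Finset.sum_congr rfl fun i _ => ?_
    have hi : (i : ℕ) < ℓ := i.isLt
    have hpow : (2:ℝ) ^ (ℓ - 1 - (i:ℕ)) / 2 ^ ℓ = (2:ℝ)⁻¹ ^ ((i:ℕ) + 1) := by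
      rw [inv_pow]
      rw [div_eq_iff (ne_of_gt h2), inv_mul_eq_div, eq_div_iff (by positivity : (2:ℝ)^((i:ℕ)+1) ≠ 0)]
      rw [← pow_add]
      congr 1
      omega
    cases h : x i <;> simp [hpow]
  rw [key, le_div_iff₀ h2, sub_mul, one_mul]
  rw [inv_pow, mul_assoc, inv_mul_cancel₀ (ne_of_gt h2), mul_one]
  constructor
  · intro h
    have : ((2:ℕ) ^ ℓ : ℝ) - (m:ℝ) ≤ (Mfun ℓ x : ℝ) := by push_cast; linarith
    have := sub_le_iff_le_add.mp this
    exact_mod_cast Nat.sub_le_iff_le_add.mpr (by exact_mod_cast this)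
  · intro h
    have : ((2^ℓ - m : ℕ) : ℝ) ≤ (Mfun ℓ x : ℝ) := by exact_mod_cast h
    rw [Nat.cast_sub hm] at this
    push_cast at this ⊢
    linarith




private lemma card_bound (ℓ m : ℕ) (hm : 1 ≤ m) (hm2 : m ≤ 2 ^ (ℓ - 1)) (j : Fin ℓ) :
    Nat.card {x : Fin ℓ → Bool //
        ¬ ((2 ^ ℓ - m ≤ Mfun ℓ (Function.update x j true)) ↔
           (2 ^ ℓ - m ≤ Mfun ℓ (Function.update x j false)))}
      ≤ 2 * min (2 ^ (ℓ - 1 - (j : ℕ))) m := by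
  have hℓ : 1 ≤ ℓ := j.pos
  have hA2 : 2 ^ (ℓ - 1 - (j : ℕ)) ≤ 2 ^ (ℓ - 1) := Nat.pow_le_pow_right (by norm_num) (by omega)
  have hp : 2 ^ (ℓ - 1) ≤ 2 ^ ℓ := Nat.pow_le_pow_right (by norm_num) (by omega)
  set F : Finset (Bool × ℕ) := Finset.univ ×ˢ
    Finset.Ico (2 ^ ℓ - m - 2 ^ (ℓ - 1 - (j : ℕ)))
      (min (2 ^ ℓ - m) (2 ^ ℓ - 2 ^ (ℓ - 1 - (j : ℕ)))) with hF
  have step : ∀ x : Fin ℓ → Bool,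
      ¬ ((2 ^ ℓ - m ≤ Mfun ℓ (Function.update x j true)) ↔
         (2 ^ ℓ - m ≤ Mfun ℓ (Function.update x j false))) →
      (x j, Mfun ℓ (Function.update x j false)) ∈ F := by
    intro x hx
    have hup : Mfun ℓ (Function.update x j true)
        = Mfun ℓ (Function.update x j false) + 2 ^ (ℓ - 1 - (j : ℕ)) := by
      rw [Mfun_update, Mfun_update]; simp; ring
    have hlt := Mfun_lt ℓ (Function.update x j true)
    rw [hup] at hx hlt
    simp only [hF, Finset.mem_product, Finset.mem_univ, true_and, Finset.mem_Ico, lt_min_iff]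
    generalize h1 : (2:ℕ) ^ (ℓ - 1 - (j : ℕ)) = A at hx hlt hA2 ⊢
    generalize h2 : (2:ℕ) ^ ℓ = T at hx hlt hp ⊢
    generalize h3 : (2:ℕ) ^ (ℓ - 1) = B at hA2 hp hm2
    omega
  have hinj : Function.Injective
      (fun x : {x : Fin ℓ → Bool //
        ¬ ((2 ^ ℓ - m ≤ Mfun ℓ (Function.update x j true)) ↔
           (2 ^ ℓ - m ≤ Mfun ℓ (Function.update x j false)))} =>
        (⟨(x.1 j, Mfun ℓ (Function.update x.1 j false)), step x.1 x.2⟩ : {y // y ∈ F})) := by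
    rintro ⟨x, hx⟩ ⟨y, hy⟩ h
    simp only [Subtype.mk.injEq, Prod.mk.injEq] at h
    obtain ⟨h1, h2⟩ := h
    have h3 := Mfun_inj ℓ h2
    refine Subtype.ext (funext fun i => ?_)
    rcases eq_or_ne i j with rfl | hij
    · exact h1
    · have := congrFun h3 i
      simpa [Function.update_of_ne hij] using this
  have hcard := Nat.card_le_card_of_injective _ hinj
  rw [Nat.card_eq_finsetCard] at hcard
  refine hcard.trans ?_
  have hFc : F.card = 2 * (min (2 ^ ℓ - m) (2 ^ ℓ - 2 ^ (ℓ - 1 - (j : ℕ)))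
      - (2 ^ ℓ - m - 2 ^ (ℓ - 1 - (j : ℕ)))) := by
    rw [hF, Finset.card_product, Nat.card_Ico]
    simp
  rw [hFc]
  have := Nat.mul_le_mul_left 2 (show (min (2 ^ ℓ - m) (2 ^ ℓ - 2 ^ (ℓ - 1 - (j : ℕ)))
      - (2 ^ ℓ - m - 2 ^ (ℓ - 1 - (j : ℕ)))) ≤ min (2 ^ (ℓ - 1 - (j : ℕ))) m from by
    simp only [le_min_iff, min_le_iff]
    generalize h1 : (2:ℕ) ^ (ℓ - 1 - (j : ℕ)) = A at hA2 ⊢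
    generalize h2 : (2:ℕ) ^ ℓ = T at hp ⊢
    generalize h3 : (2:ℕ) ^ (ℓ - 1) = B at hA2 hp hm2
    omega)
  exact this


private lemma sum_bound (ℓ m : ℕ) (hℓ : 1 ≤ ℓ) (hm : 1 ≤ m) (hm2 : m ≤ 2 ^ (ℓ - 1)) :
    ∑ j ∈ Finset.range ℓ, ((2 * min (2 ^ (ℓ - 1 - j)) m : ℕ) : ℝ) / 2 ^ ℓ
      ≤ 9 * ((m : ℝ) * (2 : ℝ)⁻¹ ^ ℓ) * |Real.log ((m : ℝ) * (2 : ℝ)⁻¹ ^ ℓ)| := by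
  set p : ℝ := (m : ℝ) * (2 : ℝ)⁻¹ ^ ℓ with hp
  have h2ℓ : (0:ℝ) < 2 ^ ℓ := by positivity
  have hm0 : (0:ℝ) < (m:ℝ) := by exact_mod_cast hm
  have hp0 : 0 < p := by positivity
  have hinv : (2:ℝ)⁻¹ ^ ℓ = 1 / 2 ^ ℓ := by rw [inv_pow, one_div]
  have hpm : p * 2 ^ ℓ = m := by rw [hp, hinv]; field_simp
  set L := Nat.log 2 m with hL
  have hLl : L ≤ ℓ - 1 := by
    rw [hL]
    calc Nat.log 2 m ≤ Nat.log 2 (2 ^ (ℓ - 1)) := Nat.log_mono_right hm2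
    _ = ℓ - 1 := Nat.log_pow (by norm_num) _
  set J := ℓ - 1 - L with hJ
  have hJl : J ≤ ℓ := by omega
  have h2L : 2 ^ L ≤ m := Nat.pow_log_le_self 2 (by omega)
  have hm2L : m < 2 ^ (L + 1) := Nat.lt_pow_succ_log_self (by norm_num) m
  -- termwise bound
  have term : ∀ j ∈ Finset.range ℓ,
      ((2 * min (2 ^ (ℓ - 1 - j)) m : ℕ) : ℝ) / 2 ^ ℓ
        ≤ if j < J then 2 * p else (2:ℝ)⁻¹ ^ j := by
    intro j hj
    rw [Finset.mem_range] at hj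
    split_ifs with h
    · have hle : ((2 * min (2 ^ (ℓ - 1 - j)) m : ℕ) : ℝ) ≤ 2 * (m:ℝ) := by
        have : (2 * min (2 ^ (ℓ - 1 - j)) m : ℕ) ≤ 2 * m := by
          have := min_le_right (2 ^ (ℓ - 1 - j)) m; omega
        exact_mod_cast this
      rw [div_le_iff₀ h2ℓ]
      calc ((2 * min (2 ^ (ℓ - 1 - j)) m : ℕ) : ℝ) ≤ 2 * (m:ℝ) := hle
      _ = 2 * p * 2 ^ ℓ := by rw [mul_assoc, hpm]
    · have hle : ((2 * min (2 ^ (ℓ - 1 - j)) m : ℕ) : ℝ) ≤ 2 * (2:ℝ) ^ (ℓ - 1 - j) := by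
        have : (2 * min (2 ^ (ℓ - 1 - j)) m : ℕ) ≤ 2 * 2 ^ (ℓ - 1 - j) := by
          have := min_le_left (2 ^ (ℓ - 1 - j)) m; omega
        exact_mod_cast this
      rw [div_le_iff₀ h2ℓ]
      have h2 : (2:ℝ)⁻¹ ^ j * 2 ^ ℓ = 2 * 2 ^ (ℓ - 1 - j) := by
        rw [inv_pow, inv_mul_eq_div, div_eq_iff (by positivity : (2:ℝ) ^ j ≠ 0)]
        rw [mul_assoc, ← pow_add, ← pow_succ']
        congr 1
        omega
      rw [h2]
      exact hle
  refine (Finset.sum_le_sum term).trans ?_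
  -- split the sum
  have hsplit : ∑ j ∈ Finset.range ℓ, (if j < J then 2 * p else (2:ℝ)⁻¹ ^ j)
      = ∑ _j ∈ Finset.range J, (2 * p) + ∑ j ∈ Finset.Ico J ℓ, (2:ℝ)⁻¹ ^ j := by
    rw [Finset.range_eq_Ico, ← Finset.sum_Ico_consecutive _ (Nat.zero_le J) hJl]
    congr 1
    · rw [← Finset.range_eq_Ico]
      exact Finset.sum_congr rfl fun j hj => by
        rw [if_pos (Finset.mem_range.mp hj)]
    · exact Finset.sum_congr rfl fun j hj => by
        rw [if_neg (by simpa using not_lt.mpr (Finset.mem_Ico.mp hj).1)]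
  rw [hsplit, Finset.sum_const, Finset.card_range, nsmul_eq_mul]
  -- geometric tail
  have htail : ∑ j ∈ Finset.Ico J ℓ, (2:ℝ)⁻¹ ^ j ≤ 2 * (2:ℝ)⁻¹ ^ J := by
    rw [Finset.sum_Ico_eq_sum_range]
    have hh : ∀ k, (2:ℝ)⁻¹ ^ (J + k) = (2:ℝ)⁻¹ ^ J * (2:ℝ)⁻¹ ^ k := fun k => pow_add _ _ _
    simp only [hh, ← Finset.mul_sum]
    have hg : ∑ k ∈ Finset.range (ℓ - J), (2:ℝ)⁻¹ ^ k ≤ 2 := by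
      rw [geom_sum_eq (by norm_num)]
      have : (0:ℝ) ≤ (2:ℝ)⁻¹ ^ (ℓ - J) := by positivity
      rw [div_le_iff_of_neg (by norm_num : (2:ℝ)⁻¹ - 1 < 0)]
      linarith
    have hJ0 : (0:ℝ) ≤ (2:ℝ)⁻¹ ^ J := by positivity
    nlinarith
  have hJp : (2:ℝ)⁻¹ ^ J ≤ 2 * p := by
    have key : (2:ℝ)⁻¹ ^ J * 2 ^ ℓ = 2 ^ (L + 1) := by
      rw [inv_pow, inv_mul_eq_div, div_eq_iff (by positivity : (2:ℝ) ^ J ≠ 0)]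
      rw [← pow_add]
      congr 1
      omega
    have h2L' : ((2:ℝ)) ^ (L + 1) ≤ 2 * (m:ℝ) := by
      have h := (Nat.cast_le (α := ℝ)).mpr (show (2:ℕ) ^ (L + 1) ≤ 2 * m by omega)
      push_cast at h
      exact h
    have hmul : (2:ℝ)⁻¹ ^ J * 2 ^ ℓ ≤ 2 * p * 2 ^ ℓ := by
      rw [key, mul_assoc, hpm]; exact h2L'
    exact le_of_mul_le_mul_right hmul h2ℓ
  -- logarithm facts
  have h2m : (2:ℝ) * m ≤ 2 ^ ℓ := by
    have h := (Nat.cast_le (α := ℝ)).mpr (show 2 * m ≤ 2 ^ ℓ by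
      have h1 : 2 * 2 ^ (ℓ - 1) = 2 ^ ℓ := by
        rw [← pow_succ']; congr 1; omega
      omega)
    push_cast at h; exact h
  have hphalf : p ≤ 1 / 2 := by nlinarith [hpm, h2m, h2ℓ]
  have hlogneg : Real.log p < 0 := Real.log_neg hp0 (by linarith)
  have habs : |Real.log p| = -Real.log p := abs_of_neg hlogneg
  have hlog2pos : (0:ℝ) < Real.log 2 := Real.log_pos (by norm_num)
  have hlog1 : Real.log 2 ≤ -Real.log p := by
    have h := Real.log_le_log hp0 hphalf
    rw [show (1:ℝ)/2 = 2⁻¹ by norm_num, Real.log_inv] at h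
    linarith
  have hlogp_eq : Real.log p = Real.log m - (ℓ:ℝ) * Real.log 2 := by
    rw [hp, Real.log_mul (ne_of_gt hm0) (by positivity), Real.log_pow, Real.log_inv]
    ring
  have hlogm : Real.log m ≤ ((L:ℝ) + 1) * Real.log 2 := by
    have h := Real.log_le_log hm0 (show (m:ℝ) ≤ (2:ℝ) ^ (L+1) by
      exact_mod_cast Nat.cast_le.mpr hm2L.le)
    rw [Real.log_pow] at h
    push_cast at h
    linarith
  have hJcast : (J:ℝ) = (ℓ:ℝ) - (L:ℝ) - 1 := by
    have : J + L + 1 = ℓ := by omega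
    have := congrArg (Nat.cast (R := ℝ)) this
    push_cast at this
    linarith
  have hlogJ : (J:ℝ) * Real.log 2 ≤ -Real.log p := by
    rw [hlogp_eq, hJcast]
    nlinarith [hlogm]
  have h9 : 2 * (J:ℝ) + 4 ≤ 9 * (-Real.log p) := by
    have hlog2gt : (0.6931471803:ℝ) < Real.log 2 := Real.log_two_gt_d9
    have hJ0 : (0:ℝ) ≤ (J:ℝ) := Nat.cast_nonneg J
    have hJlog : (J:ℝ) * 0.6931471803 ≤ (J:ℝ) * Real.log 2 :=
      mul_le_mul_of_nonneg_left hlog2gt.le hJ0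
    linarith [hlogJ, hlog1, hJlog]
  rw [habs]
  have hfinal : (J:ℝ) * (2 * p) + ∑ j ∈ Finset.Ico J ℓ, (2:ℝ)⁻¹ ^ j
      ≤ (J:ℝ) * (2 * p) + 4 * p := by
    linarith [htail, hJp]
  refine hfinal.trans ?_
  have hmul := mul_le_mul_of_nonneg_right h9 hp0.le
  calc (J:ℝ) * (2 * p) + 4 * p = (2 * (J:ℝ) + 4) * p := by ring
  _ ≤ 9 * (-Real.log p) * p := hmul
  _ = 9 * p * (-Real.log p) := by ring

/-- **Total influence of the dyadic bits.**
There is a universal constant `C > 0` such that for all `ℓ ≥ 1` and `1 ≤ m ≤ 2^{ℓ-1}`,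
setting `p = m 2^{-ℓ} ∈ (0,1/2]` and taking `x` uniform on `{0,1}^ℓ`,
the sum over the bits `j` of the probability that setting bit `j` to `1` versus `0`
changes the indicator of `{π ≥ 1 - p}` is at most `C ⋅ p ⋅ |log p|`,
where `π(x) = ∑_{k=1}^ℓ x_k 2^{-k}`. -/
theorem stmt_5 :
    ∃ C : ℝ, 0 < C ∧
      ∀ (ℓ : ℕ), 1 ≤ ℓ → ∀ (m : ℕ), 1 ≤ m → m ≤ 2 ^ (ℓ - 1) →
        let p : ℝ := (m : ℝ) * (2 : ℝ)⁻¹ ^ ℓ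
        let π : (Fin ℓ → Bool) → ℝ :=
          fun x => ∑ i, if x i then (2 : ℝ)⁻¹ ^ ((i : ℕ) + 1) else 0
        ∑ j : Fin ℓ,
          (Nat.card {x : Fin ℓ → Bool //
              ¬ ((1 - p ≤ π (Function.update x j true)) ↔
                 (1 - p ≤ π (Function.update x j false)))} : ℝ) / 2 ^ ℓ
          ≤ C * p * |Real.log p| := by
  refine ⟨9, by norm_num, ?_⟩
  intro ℓ hℓ m hm hm2
  intro p π
  have hp' : p = (m : ℝ) * (2 : ℝ)⁻¹ ^ ℓ := rfl
  have hπ' : π = fun x : Fin ℓ → Bool => ∑ i, if x i then (2 : ℝ)⁻¹ ^ ((i : ℕ) + 1) else 0 := rfl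
  have hm3 : m ≤ 2 ^ ℓ := hm2.trans (Nat.pow_le_pow_right (by norm_num) (by omega))
  have hstep : ∀ j : Fin ℓ,
      (Nat.card {x : Fin ℓ → Bool //
          ¬ ((1 - p ≤ π (Function.update x j true)) ↔
             (1 - p ≤ π (Function.update x j false)))} : ℝ)
        ≤ ((2 * min (2 ^ (ℓ - 1 - (j : ℕ))) m : ℕ) : ℝ) := by
    intro j
    have heq : Nat.card {x : Fin ℓ → Bool //
          ¬ ((1 - p ≤ π (Function.update x j true)) ↔
             (1 - p ≤ π (Function.update x j false)))}
        = Nat.card {x : Fin ℓ → Bool //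
          ¬ ((2 ^ ℓ - m ≤ Mfun ℓ (Function.update x j true)) ↔
             (2 ^ ℓ - m ≤ Mfun ℓ (Function.update x j false)))} := by
      refine Nat.card_congr (Equiv.subtypeEquivRight fun x => ?_)
      rw [hp', hπ']
      rw [pi_iff ℓ m hm3, pi_iff ℓ m hm3]
    rw [heq]
    exact_mod_cast card_bound ℓ m hm hm2 j
  calc ∑ j : Fin ℓ,
      (Nat.card {x : Fin ℓ → Bool //
          ¬ ((1 - p ≤ π (Function.update x j true)) ↔
             (1 - p ≤ π (Function.update x j false)))} : ℝ) / 2 ^ ℓ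
      ≤ ∑ j : Fin ℓ, ((2 * min (2 ^ (ℓ - 1 - (j : ℕ))) m : ℕ) : ℝ) / 2 ^ ℓ := by
        refine Finset.sum_le_sum fun j _ => ?_
        gcongr
        exact_mod_cast hstep j
    _ = ∑ j ∈ Finset.range ℓ, ((2 * min (2 ^ (ℓ - 1 - j)) m : ℕ) : ℝ) / 2 ^ ℓ :=
        Fin.sum_univ_eq_sum_range (fun j => ((2 * min (2 ^ (ℓ - 1 - j)) m : ℕ) : ℝ) / 2 ^ ℓ) ℓ
    _ ≤ 9 * p * |Real.log p| := sum_bound ℓ m hℓ hm hm2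
end

section
/- Let n > 1 be a real number, let ε > 0 and T > 0, and let f : [0,T] → (0,1) be a differentiable function satisfying f′(t) ≥ 2·f(t)·(1 − f(t))·log n for all t ∈ [0,T]. If f(0) ≥ n^{−ε}, then for every t_0 ∈ [0,T] one has f(t_0) ≥ 1 − n^{ε} · exp( −2·t_0·log n ) = 1 − n^{ε − 2 t_0}. -/
/-- **Logistic differential inequality.**
Let `n > 1`, `ε > 0`, `T > 0` and let `f : [0,T] → (0,1)` be differentiable with
`f'(t) ≥ 2 f(t)(1 - f(t)) log n` on `[0,T]`. If `f(0) ≥ n^{-ε}` then for every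
`t₀ ∈ [0,T]`, `f(t₀) ≥ 1 - n^ε exp(-2 t₀ log n)`. -/
theorem stmt_8 (n : ℝ) (hn : 1 < n) (ε T : ℝ) (hε : 0 < ε) (hT : 0 < T)
    (f f' : ℝ → ℝ)
    (hval : ∀ t ∈ Set.Icc (0 : ℝ) T, f t ∈ Set.Ioo (0 : ℝ) 1)
    (hderiv : ∀ t ∈ Set.Icc (0 : ℝ) T, HasDerivAt f (f' t) t)
    (hineq : ∀ t ∈ Set.Icc (0 : ℝ) T, 2 * f t * (1 - f t) * Real.log n ≤ f' t)
    (h0 : n ^ (-ε) ≤ f 0) :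
    ∀ t0 ∈ Set.Icc (0 : ℝ) T,
      1 - n ^ ε * Real.exp (-2 * t0 * Real.log n) ≤ f t0 := by
  intro t0 ht0
  have hn0 : (0:ℝ) < n := by linarith
  have hlogn : 0 < Real.log n := Real.log_pos hn
  set L := Real.log n with hL
  set g : ℝ → ℝ := fun t => Real.log (f t) - Real.log (1 - f t) - 2 * t * L with hg
  have hmem0 : (0:ℝ) ∈ Set.Icc (0:ℝ) T := ⟨le_refl 0, hT.le⟩
  have hgderiv : ∀ t ∈ Set.Icc (0:ℝ) T,
      HasDerivAt g (f' t / f t + f' t / (1 - f t) - 2 * L) t := by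
    intro t ht
    obtain ⟨hf0, hf1⟩ := hval t ht
    have hd := hderiv t ht
    have h1 : HasDerivAt (fun t => Real.log (f t)) (f' t / f t) t :=
      hd.log (ne_of_gt hf0)
    have h2 : HasDerivAt (fun t => (1 : ℝ) - f t) (-f' t) t := by
      exact ((hasDerivAt_const t (1:ℝ)).sub hd).congr_deriv (by simp)
    have h3 : HasDerivAt (fun t => Real.log (1 - f t)) (-f' t / (1 - f t)) t :=
      h2.log (sub_ne_zero.mpr (ne_of_lt hf1).symm)
    have h4 : HasDerivAt (fun t : ℝ => 2 * t * L) (2 * L) t := by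
      simpa using ((hasDerivAt_id t).const_mul 2).mul_const L
    have h5 := (h1.sub h3).sub h4
    exact h5.congr_deriv (by ring)
  have hcont : ContinuousOn g (Set.Icc 0 T) := fun t ht =>
    ((hgderiv t ht).continuousAt).continuousWithinAt
  have hmono : MonotoneOn g (Set.Icc 0 T) := by
    apply monotoneOn_of_deriv_nonneg (convex_Icc 0 T) hcont
    · intro t ht
      rw [interior_Icc] at ht
      exact ((hgderiv t (Set.mem_Icc_of_Ioo ht)).differentiableAt).differentiableWithinAt
    · intro t ht
      rw [interior_Icc] at ht
      have ht' := Set.mem_Icc_of_Ioo ht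
      rw [(hgderiv t ht').deriv]
      obtain ⟨hf0, hf1⟩ := hval t ht'
      have h1f : 0 < 1 - f t := by linarith
      have key : f' t / f t + f' t / (1 - f t) = f' t / (f t * (1 - f t)) := by
        field_simp
        ring
      rw [key]
      have hI := hineq t ht'
      have hpos : 0 < f t * (1 - f t) := mul_pos hf0 h1f
      rw [sub_nonneg, le_div_iff₀ hpos]
      nlinarith
  have hgle : g 0 ≤ g t0 := hmono hmem0 ht0 ht0.1
  obtain ⟨hf00, hf01⟩ := hval 0 hmem0
  obtain ⟨hft0, hft1⟩ := hval t0 ht0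
  have h1f0 : 0 < 1 - f 0 := by linarith
  have h1ft : 0 < 1 - f t0 := by linarith
  have hlogf0 : -ε * L ≤ Real.log (f 0) := by
    have h := Real.log_le_log (Real.rpow_pos_of_pos hn0 (-ε)) h0
    rw [Real.log_rpow hn0] at h
    rw [hL]
    linarith
  have hlogft : Real.log (f t0) ≤ 0 := Real.log_nonpos hft0.le hft1.le
  have hlog1f0 : Real.log (1 - f 0) ≤ 0 := Real.log_nonpos h1f0.le (by linarith)
  have hkey : Real.log (1 - f t0) ≤ ε * L - 2 * t0 * L := by
    simp only [hg, mul_zero, zero_mul, sub_zero] at hgle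
    linarith
  have hub : 1 - f t0 ≤ Real.exp (ε * L - 2 * t0 * L) := by
    calc 1 - f t0 = Real.exp (Real.log (1 - f t0)) := (Real.exp_log h1ft).symm
    _ ≤ _ := Real.exp_le_exp.mpr hkey
  have hrw : n ^ ε * Real.exp (-2 * t0 * L) = Real.exp (ε * L - 2 * t0 * L) := by
    rw [Real.rpow_def_of_pos hn0, ← hL, ← Real.exp_add]
    ring_nf
  rw [sub_le_iff_le_add, hrw]
  linarith
end

section
/- For every integer d ≥ 2 there exists a constant c_d > 0 depending only on d such that the following holds: for every x ∈ ℝ^d with ‖x‖_2 ≥ 2√d, there exist an integer K ≥ c_d·‖x‖_2^{d−1} and rotations R_1, …, R_K (elements of the special orthogonal group SO(d), acting linearly on ℝ^d) such that the K sets R_i( x + [−1/2, 1/2)^d ), 1 ≤ i ≤ K, are pairwise disjoint. -/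
open Module Submodule

lemma rot_exists (d : ℕ) (hd : 2 ≤ d) (x y : EuclideanSpace ℝ (Fin d)) (h : ‖x‖ = ‖y‖) :
    ∃ R : EuclideanSpace ℝ (Fin d) ≃ₗᵢ[ℝ] EuclideanSpace ℝ (Fin d),
      LinearEquiv.det R.toLinearEquiv = 1 ∧ R x = y := by
  by_cases hxy : x = y
  · exact ⟨LinearIsometryEquiv.refl ℝ _, map_one _, hxy⟩
  · have hfr : finrank ℝ (EuclideanSpace ℝ (Fin d)) = d := finrank_euclideanSpace_fin
    set R₁ := reflection (ℝ ∙ (x - y))ᗮ with hR₁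
    have hR₁x : R₁ x = y := reflection_sub h
    have hdet₁ : LinearEquiv.det R₁.toLinearEquiv = -1 := by
      rw [hR₁]
      rw [show (reflection (ℝ ∙ (x - y))ᗮ).toLinearEquiv.det
          = (-1 : ℝˣ) ^ finrank ℝ ((ℝ ∙ (x - y))ᗮ)ᗮ from linearEquiv_det_reflection _]
      rw [Submodule.orthogonal_orthogonal, finrank_span_singleton (sub_ne_zero.mpr hxy), pow_one]
    have hspan : finrank ℝ (ℝ ∙ y : Submodule ℝ (EuclideanSpace ℝ (Fin d))) ≤ 1 := by
      rcases eq_or_ne y 0 with hy | hy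
      · rw [hy, Submodule.span_zero_singleton, finrank_bot]; norm_num
      · rw [finrank_span_singleton hy]
    have hne : ((ℝ ∙ y)ᗮ : Submodule ℝ (EuclideanSpace ℝ (Fin d))) ≠ ⊥ := by
      intro hb
      have h2 := Submodule.finrank_add_finrank_orthogonal
        (K := (ℝ ∙ y : Submodule ℝ (EuclideanSpace ℝ (Fin d))))
      rw [hb, finrank_bot, add_zero, hfr] at h2
      omega
    obtain ⟨w, hw, hw0⟩ := Submodule.exists_mem_ne_zero_of_ne_bot hne
    set R₂ := reflection (ℝ ∙ w)ᗮ with hR₂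
    have hyw : y ∈ ((ℝ ∙ w)ᗮ : Submodule ℝ (EuclideanSpace ℝ (Fin d))) := by
      rw [Submodule.mem_orthogonal_singleton_iff_inner_left]
      have := (Submodule.mem_orthogonal_singleton_iff_inner_left).mp hw
      rwa [real_inner_comm]
    have hR₂y : R₂ y = y := reflection_mem_subspace_eq_self hyw
    have hdet₂ : LinearEquiv.det R₂.toLinearEquiv = -1 := by
      rw [hR₂]
      rw [show (reflection (ℝ ∙ w)ᗮ).toLinearEquiv.det
          = (-1 : ℝˣ) ^ finrank ℝ ((ℝ ∙ w)ᗮ)ᗮ from linearEquiv_det_reflection _]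
      rw [Submodule.orthogonal_orthogonal, finrank_span_singleton hw0, pow_one]
    refine ⟨R₁.trans R₂, ?_, by rw [LinearIsometryEquiv.trans_apply, hR₁x, hR₂y]⟩
    have h3 : (R₁.trans R₂).toLinearEquiv = R₁.toLinearEquiv ≪≫ₗ R₂.toLinearEquiv := rfl
    rw [h3, LinearEquiv.det_trans, hdet₁, hdet₂]
    norm_num

lemma coord_dist_le {d : ℕ} (x y : EuclideanSpace ℝ (Fin d)) (i : Fin d) :
    dist (x i) (y i) ≤ dist x y := by
  rw [EuclideanSpace.dist_eq]
  rw [show dist (x i) (y i) = Real.sqrt (dist (x i) (y i) ^ 2) from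
    (Real.sqrt_sq dist_nonneg).symm]
  apply Real.sqrt_le_sqrt
  exact Finset.single_le_sum (f := fun j => dist (x j) (y j) ^ 2)
    (fun j _ => sq_nonneg _) (Finset.mem_univ i)

lemma cube_dist {d : ℕ} (x y : EuclideanSpace ℝ (Fin d))
    (h : ∀ t, y t ∈ Set.Ico (x t - 1/2) (x t + 1/2)) :
    dist y x ≤ Real.sqrt d / 2 := by
  rw [EuclideanSpace.dist_eq]
  have hb : ∀ t : Fin d, dist (y t) (x t) ^ 2 ≤ (1/2 : ℝ)^2 := by
    intro t
    have := h t
    rw [Set.mem_Ico] at this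
    have h1 : |y t - x t| ≤ 1/2 := abs_le.mpr ⟨by linarith [this.1], by linarith [this.2]⟩
    calc dist (y t) (x t) ^ 2 = |y t - x t| ^ 2 := by rw [Real.dist_eq]
      _ ≤ (1/2:ℝ)^2 := by nlinarith [abs_nonneg (y t - x t)]
  calc Real.sqrt (∑ t, dist (y t) (x t) ^ 2) ≤ Real.sqrt (∑ _t : Fin d, (1/2:ℝ)^2) :=
        Real.sqrt_le_sqrt (Finset.sum_le_sum fun t _ => hb t)
    _ = Real.sqrt (d / 4) := by rw [Finset.sum_const]; norm_num; ring_nf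
    _ = Real.sqrt d / 2 := by
        rw [Real.sqrt_div (by positivity) 4, show (4:ℝ) = 2^2 by norm_num,
          Real.sqrt_sq (by norm_num : (0:ℝ) ≤ 2)]

/-- **Many rotated disjoint copies of a unit cube far from the origin.**
For every `d ≥ 2` there is `c_d > 0` such that for every `x ∈ ℝ^d` with
`‖x‖₂ ≥ 2√d`, there exist `K ≥ c_d ‖x‖₂^{d-1}` rotations `R₁,…,R_K ∈ SO(d)`
(linear isometries of determinant 1) such that the sets `R_i(x + [-1/2,1/2)^d)`
are pairwise disjoint. -/
theorem stmt_14 (d : ℕ) (hd : 2 ≤ d) :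
    ∃ c : ℝ, 0 < c ∧
      ∀ x : EuclideanSpace ℝ (Fin d), 2 * Real.sqrt d ≤ ‖x‖ →
        ∃ K : ℕ, c * ‖x‖ ^ (d - 1) ≤ (K : ℝ) ∧
          ∃ R : Fin K → (EuclideanSpace ℝ (Fin d) ≃ₗᵢ[ℝ] EuclideanSpace ℝ (Fin d)),
            (∀ i, LinearEquiv.det (R i).toLinearEquiv = 1) ∧
            ∀ i j, i ≠ j →
              Disjoint
                ((R i) '' {y : EuclideanSpace ℝ (Fin d) |
                  ∀ t, y t ∈ Set.Ico (x t - 1 / 2) (x t + 1 / 2)})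
                ((R j) '' {y : EuclideanSpace ℝ (Fin d) |
                  ∀ t, y t ∈ Set.Ico (x t - 1 / 2) (x t + 1 / 2)}) := by
  obtain ⟨m, rfl⟩ : ∃ m, d = m + 1 := ⟨d - 1, by omega⟩
  have hm : 1 ≤ m := by omega
  set d := m + 1
  refine ⟨(1 / (4 * d)) ^ m, by positivity, ?_⟩
  intro x hx
  set r := ‖x‖ with hr
  have hd1 : (1:ℝ) ≤ Real.sqrt d := by
    rw [show (1:ℝ) = Real.sqrt 1 by simp]
    exact Real.sqrt_le_sqrt (by exact_mod_cast Nat.one_le_iff_ne_zero.mpr (by omega))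
  have hrpos : (0:ℝ) < r := lt_of_lt_of_le (by linarith) hx
  set n : ℕ := ⌊r / (4 * (d:ℝ))⌋₊ + 1 with hn
  have hnr : r / (4 * (d:ℝ)) < n := by
    have := Nat.lt_floor_add_one (r / (4 * (d:ℝ)))
    rw [hn]; push_cast; exact_mod_cast this
  have hn1 : (n:ℝ) - 1 ≤ r / (4 * (d:ℝ)) := by
    have h0 : ((n:ℕ):ℝ) - 1 = (⌊r / (4 * (d:ℝ))⌋₊ : ℝ) := by rw [hn]; push_cast; ring
    rw [h0]
    exact Nat.floor_le (by positivity)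
  refine ⟨n ^ m, ?_, ?_⟩
  · have h1 : (1 / (4 * (d:ℝ))) ^ m * r ^ m = (r / (4 * d)) ^ m := by
      rw [← mul_pow]; ring_nf
    have : d - 1 = m := by omega
    rw [this, h1, Nat.cast_pow]
    exact pow_le_pow_left₀ (by positivity) hnr.le m
  -- the grid points
  · set A : (Fin m → Fin n) → ℝ := fun u => ∑ i, (2 * Real.sqrt d * (u i : ℝ)) ^ 2 with hA
    have hAnn : ∀ u, 0 ≤ A u := fun u => Finset.sum_nonneg fun i _ => sq_nonneg _
    have hAle : ∀ u, A u ≤ r ^ 2 := by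
      intro u
      have h1 : ∀ i : Fin m, (2 * Real.sqrt d * (u i : ℝ)) ^ 2 ≤ 4 * d * ((n:ℝ) - 1)^2 := by
        intro i
        have hui : (u i : ℝ) ≤ (n:ℝ) - 1 := by
          have h2 : (u i : ℕ) + 1 ≤ n := (u i).2
          have h3 : ((u i : ℕ):ℝ) + 1 ≤ (n:ℝ) := by exact_mod_cast h2
          linarith
        have hsq : Real.sqrt d ^ 2 = d := Real.sq_sqrt (by positivity)
        have hun : (0:ℝ) ≤ (u i : ℝ) := Nat.cast_nonneg _
        have husq : ((u i : ℕ):ℝ)^2 ≤ ((n:ℝ)-1)^2 := by nlinarith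
        have hexp : (2 * Real.sqrt d * ((u i : ℕ):ℝ))^2 = 4 * (d:ℝ) * ((u i : ℕ):ℝ)^2 := by
          rw [mul_pow, mul_pow, hsq]; ring
        rw [hexp]
        have hd0 : (0:ℝ) ≤ 4 * (d:ℝ) := by positivity
        nlinarith
      have h2 : A u ≤ ∑ _i : Fin m, 4 * (d:ℝ) * ((n:ℝ) - 1)^2 :=
        Finset.sum_le_sum fun i _ => h1 i
      rw [Finset.sum_const, Finset.card_univ, Fintype.card_fin] at h2
      have hmd : (m:ℝ) ≤ d := by push_cast [d]; linarith
      have hdn : 4 * (d:ℝ) * ((n:ℝ)-1) ≤ r := by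
        have h4 : (0:ℝ) < 4 * d := by positivity
        calc 4 * (d:ℝ) * ((n:ℝ)-1) ≤ 4 * d * (r / (4*d)) := by nlinarith
          _ = r := by field_simp
      have hn1' : (0:ℝ) ≤ (n:ℝ) - 1 := by
        have h5 : (1:ℕ) ≤ n := Nat.le_add_left 1 _
        have h6 : (1:ℝ) ≤ (n:ℝ) := by exact_mod_cast h5
        linarith
      rw [nsmul_eq_mul] at h2
      have hB : (0:ℝ) ≤ 4 * (d:ℝ) * ((n:ℝ)-1) := by
        have : (0:ℝ) ≤ 4 * (d:ℝ) := by positivity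
        exact mul_nonneg this hn1'
      calc A u ≤ (m:ℝ) * (4 * (d:ℝ) * ((n:ℝ)-1)^2) := h2
        _ ≤ (d:ℝ) * (4 * (d:ℝ) * ((n:ℝ)-1)^2) :=
            mul_le_mul_of_nonneg_right hmd (by positivity)
        _ = (4 * (d:ℝ) * ((n:ℝ)-1))^2 / 4 := by ring
        _ ≤ r^2 / 4 := by
            have := pow_le_pow_left₀ hB hdn 2
            linarith
        _ ≤ r^2 := by nlinarith [sq_nonneg r]
    set p : (Fin m → Fin n) → EuclideanSpace ℝ (Fin d) := fun u =>
      WithLp.toLp 2 (Fin.snoc (α := fun _ => ℝ) (fun i : Fin m => 2 * Real.sqrt d * (u i : ℝ)) (Real.sqrt (r ^ 2 - A u))) with hp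
    have hpnorm : ∀ u, ‖p u‖ = r := by
      intro u
      rw [EuclideanSpace.norm_eq]
      have hsum : ∑ t : Fin d, ‖p u t‖ ^ 2 = r ^ 2 := by
        rw [Fin.sum_univ_castSucc]
        have h1 : ∀ i : Fin m, ‖p u i.castSucc‖ ^ 2 = (2 * Real.sqrt d * (u i : ℝ)) ^ 2 := by
          intro i
          simp only [hp, PiLp.toLp_apply, Fin.snoc_castSucc, Real.norm_eq_abs, sq_abs]
        have h2 : ‖p u (Fin.last m)‖ ^ 2 = r ^ 2 - A u := by
          simp only [hp, PiLp.toLp_apply, Fin.snoc_last, Real.norm_eq_abs, sq_abs]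
          exact Real.sq_sqrt (by linarith [hAle u])
        rw [Finset.sum_congr rfl fun i _ => h1 i, h2, hA]
        ring
      rw [hsum]
      exact Real.sqrt_sq hrpos.le
    have hpdist : ∀ u u', u ≠ u' → 2 * Real.sqrt d ≤ dist (p u) (p u') := by
      intro u u' huu
      obtain ⟨i, hi⟩ := Function.ne_iff.mp huu
      have h1 : 2 * Real.sqrt d ≤ dist (p u i.castSucc) (p u' i.castSucc) := by
        simp only [hp, PiLp.toLp_apply, Fin.snoc_castSucc, Real.dist_eq]
        have h2 : 2 * Real.sqrt d * (u i : ℝ) - 2 * Real.sqrt d * (u' i : ℝ)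
            = 2 * Real.sqrt d * ((u i : ℕ) - (u' i : ℕ) : ℝ) := by push_cast; ring
        rw [h2, abs_mul]
        have h3 : (1:ℝ) ≤ |((u i : ℕ) - (u' i : ℕ) : ℝ)| := by
          have : (u i : ℕ) ≠ (u' i : ℕ) := fun hc => hi (Fin.ext hc)
          have h4 : ((u i : ℕ) : ℝ) - ((u' i : ℕ) : ℝ) ≠ 0 := by
            intro hc; exact this (by exact_mod_cast sub_eq_zero.mp hc)
          have hz : ((u i : ℕ) : ℤ) - ((u' i : ℕ) : ℤ) ≠ 0 :=
            sub_ne_zero.mpr (fun hc => this (by exact_mod_cast hc))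
          have h5 : (1:ℤ) ≤ |((u i : ℕ) : ℤ) - ((u' i : ℕ) : ℤ)| := Int.one_le_abs hz
          have h6 : ((u i : ℕ) : ℝ) - ((u' i : ℕ) : ℝ)
              = ((((u i : ℕ) : ℤ) - ((u' i : ℕ) : ℤ) : ℤ) : ℝ) := by push_cast; ring
          rw [h6, ← Int.cast_abs]
          exact_mod_cast h5
        have h6 : |2 * Real.sqrt d| = 2 * Real.sqrt d := abs_of_nonneg (by positivity)
        rw [h6]
        nlinarith [Real.sqrt_nonneg (d:ℝ), hd1]
      exact le_trans h1 (coord_dist_le _ _ _)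
    -- rotations
    have hrot : ∀ u : Fin m → Fin n,
        ∃ R : EuclideanSpace ℝ (Fin d) ≃ₗᵢ[ℝ] EuclideanSpace ℝ (Fin d),
          LinearEquiv.det R.toLinearEquiv = 1 ∧ R x = p u :=
      fun u => rot_exists d hd x (p u) (by rw [hpnorm u])
    choose R hRdet hRx using hrot
    set v : Fin (n ^ m) → (Fin m → Fin n) := fun i => finFunctionFinEquiv.symm i with hv
    have hvinj : Function.Injective v := fun a b hab => by
      simpa using finFunctionFinEquiv.symm.injective hab
    refine ⟨fun i => R (v i), fun i => hRdet _, ?_⟩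
    intro i j hij
    rw [Set.disjoint_left]
    rintro z ⟨a, ha, haz⟩ ⟨b, hb, hbz⟩
    have hda : dist a x ≤ Real.sqrt d / 2 := cube_dist x a ha
    have hdb : dist b x ≤ Real.sqrt d / 2 := cube_dist x b hb
    have h1 : dist (R (v i) x) (R (v j) x) ≤ Real.sqrt d := by
      calc dist (R (v i) x) (R (v j) x)
          ≤ dist (R (v i) x) z + dist z (R (v j) x) := dist_triangle _ _ _
        _ = dist (R (v i) x) (R (v i) a) + dist (R (v j) b) (R (v j) x) := by rw [haz, hbz]
        _ = dist x a + dist b x := by rw [LinearIsometryEquiv.dist_map, LinearIsometryEquiv.dist_map]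
        _ ≤ Real.sqrt d / 2 + Real.sqrt d / 2 := by
            rw [dist_comm x a]; exact add_le_add hda hdb
        _ = Real.sqrt d := by ring
    have h2 : 2 * Real.sqrt d ≤ dist (R (v i) x) (R (v j) x) := by
      rw [hRx (v i), hRx (v j)]
      exact hpdist _ _ (fun hc => hij (hvinj hc))
    linarith
end
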